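/- arXiv:2410.10768 — 2 statements merged into one kernel-verified Lean document; each statement's English description precedes it below -/
import Mathlib

section
/- The Gel'fand–Fuks bilinear form is a Lie-algebra 2-cocycle on the Witt algebra of the circle: for all smooth 2π-periodic functions ξ, η, χ : ℝ → ℝ, (i) c₀(ξ,η) = −c₀(η,ξ), and (ii) c₀(ξ, [η,χ]) + c₀(χ, [ξ,η]) + c₀(η, [χ,ξ]) = 0. -/
open scoped Real
open intervalIntegral

/-- The Witt bracket `[ξ,η] = ξη' − ηξ'` on functions on the circle. -/
noncomputable def wittBracket (ξ η : ℝ → ℝ) : ℝ → ℝ :=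
  fun τ => ξ τ * deriv η τ - η τ * deriv ξ τ

/-- The Gel'fand–Fuks cocycle `c₀(ξ,η) = ∫₀^{2π} ξ'(τ)η''(τ) dτ`. -/
noncomputable def gelfandFuks (ξ η : ℝ → ℝ) : ℝ :=
  ∫ τ in (0 : ℝ)..(2 * π), deriv ξ τ * deriv (deriv η) τ

private lemma periodic_deriv' (f : ℝ → ℝ) (c : ℝ) (hp : Function.Periodic f c) :
    Function.Periodic (deriv f) c := by
  intro x
  rw [← deriv_comp_add_const, show (fun y => f (y + c)) = f from funext hp]

private lemma cd_deriv {f : ℝ → ℝ} (hf : ContDiff ℝ (⊤ : ℕ∞) f) : ContDiff ℝ (⊤ : ℕ∞) (deriv f) :=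
  (contDiff_infty_iff_deriv.mp hf).2

private lemma witt_d2 (η χ : ℝ → ℝ) (hη : ContDiff ℝ (⊤ : ℕ∞) η) (hχ : ContDiff ℝ (⊤ : ℕ∞) χ) :
    deriv (deriv (wittBracket η χ)) = fun τ =>
      deriv η τ * deriv (deriv χ) τ + η τ * deriv (deriv (deriv χ)) τ
        - deriv χ τ * deriv (deriv η) τ - χ τ * deriv (deriv (deriv η)) τ := by
  have hη : ContDiff ℝ (⊤ : ℕ∞) η := hη.of_le (by simp)
  have hχ : ContDiff ℝ (⊤ : ℕ∞) χ := hχ.of_le (by simp)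
  have dη := hη.differentiable (by simp)
  have dχ := hχ.differentiable (by simp)
  have d2η := (cd_deriv hη).differentiable (by simp)
  have d2χ := (cd_deriv hχ).differentiable (by simp)
  have d3η := (cd_deriv (cd_deriv hη)).differentiable (by simp)
  have d3χ := (cd_deriv (cd_deriv hχ)).differentiable (by simp)
  have h1 : deriv (wittBracket η χ) = fun τ => η τ * deriv (deriv χ) τ - χ τ * deriv (deriv η) τ := by
    funext τ
    have h : HasDerivAt (wittBracket η χ)
        (deriv η τ * deriv χ τ + η τ * deriv (deriv χ) τ
          - (deriv χ τ * deriv η τ + χ τ * deriv (deriv η) τ)) τ :=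
      (((dη τ).hasDerivAt.mul (d2χ τ).hasDerivAt).sub
        ((dχ τ).hasDerivAt.mul (d2η τ).hasDerivAt))
    rw [h.deriv]; ring
  rw [h1]
  funext τ
  have h : HasDerivAt (fun τ => η τ * deriv (deriv χ) τ - χ τ * deriv (deriv η) τ)
      (deriv η τ * deriv (deriv χ) τ + η τ * deriv (deriv (deriv χ)) τ
        - (deriv χ τ * deriv (deriv η) τ + χ τ * deriv (deriv (deriv η)) τ)) τ :=
    (((dη τ).hasDerivAt.mul (d3χ τ).hasDerivAt).sub
      ((dχ τ).hasDerivAt.mul (d3η τ).hasDerivAt))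
  rw [h.deriv]; ring

/-- The Gel'fand–Fuks bilinear form is a Lie-algebra 2-cocycle on the Witt algebra:
it is antisymmetric and satisfies the cocycle identity. -/
theorem gelfandFuks_is_cocycle (ξ η χ : ℝ → ℝ)
    (hξ : ContDiff ℝ (⊤ : ℕ∞) ξ) (hξp : Function.Periodic ξ (2 * π))
    (hη : ContDiff ℝ (⊤ : ℕ∞) η) (hηp : Function.Periodic η (2 * π))
    (hχ : ContDiff ℝ (⊤ : ℕ∞) χ) (hχp : Function.Periodic χ (2 * π)) :
    gelfandFuks ξ η = -gelfandFuks η ξ ∧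
      gelfandFuks ξ (wittBracket η χ) + gelfandFuks χ (wittBracket ξ η)
        + gelfandFuks η (wittBracket χ ξ) = 0 := by
  have hξ' : ContDiff ℝ (⊤ : ℕ∞) ξ := hξ.of_le (by simp)
  have hη' : ContDiff ℝ (⊤ : ℕ∞) η := hη.of_le (by simp)
  have hχ' : ContDiff ℝ (⊤ : ℕ∞) χ := hχ.of_le (by simp)
  have dξ := hξ'.differentiable (by simp)
  have dη := hη.differentiable (by simp)
  have dχ := hχ.differentiable (by simp)
  have d2ξ := (cd_deriv hξ').differentiable (by simp)
  have d2η := (cd_deriv hη').differentiable (by simp)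
  have d2χ := (cd_deriv hχ').differentiable (by simp)
  have d3ξ := (cd_deriv (cd_deriv hξ')).differentiable (by simp)
  have d3η := (cd_deriv (cd_deriv hη')).differentiable (by simp)
  have d3χ := (cd_deriv (cd_deriv hχ')).differentiable (by simp)
  have c0ξ := dξ.continuous
  have c0η := dη.continuous
  have c0χ := dχ.continuous
  have cξ := d2ξ.continuous
  have cη := d2η.continuous
  have cχ := d2χ.continuous
  have c2ξ := d3ξ.continuous
  have c2η := d3η.continuous
  have c2χ := d3χ.continuous
  have c3ξ := ((cd_deriv (cd_deriv (cd_deriv hξ'))).differentiable (by simp)).continuous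
  have c3η := ((cd_deriv (cd_deriv (cd_deriv hη'))).differentiable (by simp)).continuous
  have c3χ := ((cd_deriv (cd_deriv (cd_deriv hχ'))).differentiable (by simp)).continuous
  have pdξ := periodic_deriv' ξ _ hξp
  have pdη := periodic_deriv' η _ hηp
  have pdχ := periodic_deriv' χ _ hχp
  have pd2ξ := periodic_deriv' _ _ pdξ
  have pd2η := periodic_deriv' _ _ pdη
  have pd2χ := periodic_deriv' _ _ pdχ
  constructor
  · -- antisymmetry
    rw [eq_neg_iff_add_eq_zero, gelfandFuks, gelfandFuks, ← intervalIntegral.integral_add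
        (f := fun τ => deriv ξ τ * deriv (deriv η) τ) (g := fun τ => deriv η τ * deriv (deriv ξ) τ)
        ((cξ.mul c2η).intervalIntegrable _ _) ((cη.mul c2ξ).intervalIntegrable _ _)]
    have key : ∀ τ ∈ Set.uIcc (0:ℝ) (2*π),
        HasDerivAt (fun τ => deriv ξ τ * deriv η τ)
          (deriv ξ τ * deriv (deriv η) τ + deriv η τ * deriv (deriv ξ) τ) τ := by
      intro τ _
      have h := ((d2ξ τ).hasDerivAt.mul (d2η τ).hasDerivAt)
      exact h.congr_deriv (by ring)
    rw [intervalIntegral.integral_eq_sub_of_hasDerivAt key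
        (((cξ.mul c2η).add (cη.mul c2ξ)).intervalIntegrable _ _)]
    have h0 : deriv ξ (2*π) * deriv η (2*π) = deriv ξ 0 * deriv η 0 := by
      have e1 : deriv ξ (2*π) = deriv ξ 0 := by simpa using pdξ 0
      have e2 : deriv η (2*π) = deriv η 0 := by simpa using pdη 0
      rw [e1, e2]
    simp [h0]
  · -- cocycle identity
    rw [gelfandFuks, gelfandFuks, gelfandFuks,
        witt_d2 η χ hη hχ, witt_d2 ξ η hξ hη, witt_d2 χ ξ hχ hξ]
    have i1 : IntervalIntegrable (fun τ => deriv ξ τ *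
        (deriv η τ * deriv (deriv χ) τ + η τ * deriv (deriv (deriv χ)) τ
          - deriv χ τ * deriv (deriv η) τ - χ τ * deriv (deriv (deriv η)) τ))
        MeasureTheory.volume 0 (2*π) :=
      (cξ.mul ((((cη.mul c2χ).add (c0η.mul c3χ)).sub
        (cχ.mul c2η)).sub (c0χ.mul c3η))).intervalIntegrable _ _
    have i2 : IntervalIntegrable (fun τ => deriv χ τ *
        (deriv ξ τ * deriv (deriv η) τ + ξ τ * deriv (deriv (deriv η)) τ
          - deriv η τ * deriv (deriv ξ) τ - η τ * deriv (deriv (deriv ξ)) τ))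
        MeasureTheory.volume 0 (2*π) :=
      (cχ.mul ((((cξ.mul c2η).add (c0ξ.mul c3η)).sub
        (cη.mul c2ξ)).sub (c0η.mul c3ξ))).intervalIntegrable _ _
    have i3 : IntervalIntegrable (fun τ => deriv η τ *
        (deriv χ τ * deriv (deriv ξ) τ + χ τ * deriv (deriv (deriv ξ)) τ
          - deriv ξ τ * deriv (deriv χ) τ - ξ τ * deriv (deriv (deriv χ)) τ))
        MeasureTheory.volume 0 (2*π) :=
      (cη.mul ((((cχ.mul c2ξ).add (c0χ.mul c3ξ)).sub
        (cξ.mul c2χ)).sub (c0ξ.mul c3χ))).intervalIntegrable _ _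
    rw [← intervalIntegral.integral_add i1 i2, ← intervalIntegral.integral_add (i1.add i2) i3]
    have key : ∀ τ ∈ Set.uIcc (0:ℝ) (2*π),
        HasDerivAt (fun τ =>
          (deriv ξ τ * η τ - ξ τ * deriv η τ) * deriv (deriv χ) τ
            + (deriv χ τ * ξ τ - χ τ * deriv ξ τ) * deriv (deriv η) τ
            + (deriv η τ * χ τ - η τ * deriv χ τ) * deriv (deriv ξ) τ)
          (deriv ξ τ *
            (deriv η τ * deriv (deriv χ) τ + η τ * deriv (deriv (deriv χ)) τ
              - deriv χ τ * deriv (deriv η) τ - χ τ * deriv (deriv (deriv η)) τ)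
          + deriv χ τ *
            (deriv ξ τ * deriv (deriv η) τ + ξ τ * deriv (deriv (deriv η)) τ
              - deriv η τ * deriv (deriv ξ) τ - η τ * deriv (deriv (deriv ξ)) τ)
          + deriv η τ *
            (deriv χ τ * deriv (deriv ξ) τ + χ τ * deriv (deriv (deriv ξ)) τ
              - deriv ξ τ * deriv (deriv χ) τ - ξ τ * deriv (deriv (deriv χ)) τ)) τ := by
      intro τ _
      have hA : HasDerivAt (fun τ => deriv ξ τ * η τ - ξ τ * deriv η τ)
          (deriv (deriv ξ) τ * η τ + deriv ξ τ * deriv η τ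
            - (deriv ξ τ * deriv η τ + ξ τ * deriv (deriv η) τ)) τ :=
        ((d2ξ τ).hasDerivAt.mul (dη τ).hasDerivAt).sub
          ((dξ τ).hasDerivAt.mul (d2η τ).hasDerivAt)
      have hB : HasDerivAt (fun τ => deriv χ τ * ξ τ - χ τ * deriv ξ τ)
          (deriv (deriv χ) τ * ξ τ + deriv χ τ * deriv ξ τ
            - (deriv χ τ * deriv ξ τ + χ τ * deriv (deriv ξ) τ)) τ :=
        ((d2χ τ).hasDerivAt.mul (dξ τ).hasDerivAt).sub
          ((dχ τ).hasDerivAt.mul (d2ξ τ).hasDerivAt)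
      have hC : HasDerivAt (fun τ => deriv η τ * χ τ - η τ * deriv χ τ)
          (deriv (deriv η) τ * χ τ + deriv η τ * deriv χ τ
            - (deriv η τ * deriv χ τ + η τ * deriv (deriv χ)  τ)) τ :=
        ((d2η τ).hasDerivAt.mul (dχ τ).hasDerivAt).sub
          ((dη τ).hasDerivAt.mul (d2χ τ).hasDerivAt)
      have h := ((hA.mul (d3χ τ).hasDerivAt).add (hB.mul (d3η τ).hasDerivAt)).add
        (hC.mul (d3ξ τ).hasDerivAt)
      exact h.congr_deriv (by ring)
    rw [intervalIntegral.integral_eq_sub_of_hasDerivAt key ((i1.add i2).add i3)]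
    have hper : Function.Periodic (fun τ =>
        (deriv ξ τ * η τ - ξ τ * deriv η τ) * deriv (deriv χ) τ
          + (deriv χ τ * ξ τ - χ τ * deriv ξ τ) * deriv (deriv η) τ
          + (deriv η τ * χ τ - η τ * deriv χ τ) * deriv (deriv ξ) τ) (2*π) :=
      ((((pdξ.mul hηp).sub (hξp.mul pdη)).mul pd2χ).add
        (((pdχ.mul hξp).sub (hχp.mul pdξ)).mul pd2η)).add
        (((pdη.mul hχp).sub (hηp.mul pdχ)).mul pd2ξ)
    have h0 := hper 0
    simp only [zero_add] at h0
    simp only [h0, sub_self]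
end

section
/- The stabilizer of the Virasoro orbit point f ≡ −t n²/24 is three-dimensional: let n be a positive integer and t ≠ 0 a real number. A smooth function ξ : ℝ → ℝ satisfies the stabilizer equation 2ξ'(τ)·(−t n²/24) − (t/12)·ξ'''(τ) = 0 for all τ if and only if ξ'''(τ) + n²·ξ'(τ) = 0 for all τ, which holds if and only if there exist real constants a, b, c with ξ(τ) = a + b·cos(nτ) + c·sin(nτ) for all τ. In particular, the space of such ξ is spanned by the three functions 1, cos(n·), sin(n·) (and every such ξ is automatically 2π-periodic), so the infinitesimal stabilizer is three-dimensional, in accordance with Stab = SL^{(n)}(2,ℝ). -/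
open scoped Real
open scoped ContDiff in
lemma trig_hasDerivAt (k b c : ℝ) (τ : ℝ) :
    HasDerivAt (fun x => b * Real.cos (k*x) + c * Real.sin (k*x))
      ((c*k) * Real.cos (k*τ) + (-(b*k)) * Real.sin (k*τ)) τ := by
  have hk : HasDerivAt (fun x : ℝ => k*x) k τ := by
    simpa using (hasDerivAt_id τ).const_mul k
  have hc : HasDerivAt (fun x => Real.cos (k*x)) (-Real.sin (k*τ) * k) τ :=
    (Real.hasDerivAt_cos (k*τ)).comp τ hk
  have hs : HasDerivAt (fun x => Real.sin (k*x)) (Real.cos (k*τ) * k) τ :=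
    (Real.hasDerivAt_sin (k*τ)).comp τ hk
  have := (hc.const_mul b).add (hs.const_mul c)
  refine this.congr_deriv ?_
  ring

open scoped ContDiff in
lemma ode2_solution (k : ℝ) (hk : 0 < k) (g : ℝ → ℝ) (hg : ContDiff ℝ ∞ g)
    (hode : ∀ τ, deriv (deriv g) τ = -(k^2) * g τ) :
    ∀ τ, g τ = g 0 * Real.cos (k*τ) + (deriv g 0 / k) * Real.sin (k*τ) := by
  have hk0 : k ≠ 0 := ne_of_gt hk
  set c1 := g 0 with hc1
  set c2 := deriv g 0 / k with hc2
  have hg1 : ContDiff ℝ ∞ (deriv g) := (contDiff_infty_iff_deriv.mp hg).2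
  set E : ℝ → ℝ := fun τ => g τ - (c1 * Real.cos (k*τ) + c2 * Real.sin (k*τ)) with hE
  set e1 : ℝ → ℝ := fun τ => deriv g τ -
      ((c2*k) * Real.cos (k*τ) + (-(c1*k)) * Real.sin (k*τ)) with he1
  have hEd : ∀ τ, HasDerivAt E (e1 τ) τ := fun τ =>
    (((contDiff_infty_iff_deriv.mp hg).1 τ).hasDerivAt).sub (trig_hasDerivAt k c1 c2 τ)
  have he1d : ∀ τ, HasDerivAt e1 (-(k^2) * E τ) τ := by
    intro τ
    have := (((contDiff_infty_iff_deriv.mp hg1).1 τ).hasDerivAt).sub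
      (trig_hasDerivAt k (c2*k) (-(c1*k)) τ)
    refine this.congr_deriv ?_
    rw [hode τ]
    simp only [hE]
    ring
  set F : ℝ → ℝ := fun τ => (e1 τ)^2 + k^2 * (E τ)^2 with hF
  have hFd : ∀ τ, HasDerivAt F 0 τ := by
    intro τ
    have h1 := (he1d τ).pow 2
    have h2 := ((hEd τ).pow 2).const_mul (k^2)
    have := h1.add h2
    refine this.congr_deriv ?_
    ring
  have hconst : ∀ τ, F τ = F 0 :=
    fun τ => is_const_of_deriv_eq_zero
      (fun x => (hFd x).differentiableAt) (fun x => (hFd x).deriv) τ 0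
  have hF0 : F 0 = 0 := by
    simp only [hF, he1, hE, mul_zero, Real.cos_zero, Real.sin_zero]
    rw [hc2]
    field_simp
    rw [hc1]; ring
  intro τ
  have hFτ : F τ = 0 := (hconst τ).trans hF0
  have hFτ' : (e1 τ)^2 + k^2 * (E τ)^2 = 0 := hFτ
  have hE0 : E τ = 0 := by
    have h3 : (E τ)^2 = 0 := by nlinarith [pow_pos hk 2, sq_nonneg (E τ), sq_nonneg (e1 τ)]
    exact pow_eq_zero_iff two_ne_zero |>.mp h3
  have : g τ - (c1 * Real.cos (k*τ) + c2 * Real.sin (k*τ)) = 0 := hE0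
  linarith


/-- The stabilizer of the Virasoro orbit point `f ≡ −t n²/24` is three-dimensional:
for a smooth `ξ : ℝ → ℝ`, the stabilizer equation
`2ξ'(τ)·(−t n²/24) − (t/12)·ξ'''(τ) = 0` holds for all `τ` iff
`ξ''' + n²ξ' = 0` identically, iff `ξ(τ) = a + b·cos(nτ) + c·sin(nτ)` for some
constants `a, b, c`; moreover every such `ξ` is automatically `2π`-periodic,
so the infinitesimal stabilizer is spanned by `1, cos(n·), sin(n·)` and is
three-dimensional, in accordance with `Stab = SL⁽ⁿ⁾(2,ℝ)`. -/
theorem virasoro_stabilizer (n : ℕ) (hn : 0 < n) (t : ℝ) (ht : t ≠ 0)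
    (ξ : ℝ → ℝ) (hξ : ContDiff ℝ (⊤ : ℕ∞) ξ) :
    ((∀ τ : ℝ, 2 * deriv ξ τ * (-t * (n : ℝ) ^ 2 / 24)
          - (t / 12) * iteratedDeriv 3 ξ τ = 0) ↔
        (∀ τ : ℝ, iteratedDeriv 3 ξ τ + (n : ℝ) ^ 2 * deriv ξ τ = 0)) ∧
    ((∀ τ : ℝ, iteratedDeriv 3 ξ τ + (n : ℝ) ^ 2 * deriv ξ τ = 0) ↔
        (∃ a b c : ℝ, ∀ τ : ℝ,
          ξ τ = a + b * Real.cos (n * τ) + c * Real.sin (n * τ))) ∧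
    ((∃ a b c : ℝ, ∀ τ : ℝ,
          ξ τ = a + b * Real.cos (n * τ) + c * Real.sin (n * τ)) →
        Function.Periodic ξ (2 * π)) := by
  have hkpos : (0:ℝ) < (n:ℝ) := by exact_mod_cast hn
  have hk0 : (n:ℝ) ≠ 0 := ne_of_gt hkpos
  set k : ℝ := (n:ℝ) with hkdef
  have hiter : iteratedDeriv 3 ξ = deriv (deriv (deriv ξ)) := by
    simp [iteratedDeriv_succ, iteratedDeriv_zero]
  refine ⟨?_, ?_, ?_⟩
  · -- first iff
    constructor
    · intro h τ
      have h' := h τ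
      have ht12 : t / 12 ≠ 0 := div_ne_zero ht (by norm_num)
      have hmul : (t/12) * (iteratedDeriv 3 ξ τ + k^2 * deriv ξ τ) = 0 := by
        linear_combination -(1:ℝ) * h'
      exact (mul_eq_zero.mp hmul).resolve_left ht12
    · intro h τ
      have h' := h τ
      linear_combination (-(t/12)) * h'
  · constructor
    · -- ODE → explicit form
      intro h
      have hxi2 : ContDiff ℝ (((⊤:ℕ∞)) : WithTop ℕ∞) ξ := hξ.of_le (by simp)
      have hg : ContDiff ℝ (((⊤:ℕ∞)) : WithTop ℕ∞) (deriv ξ) := (contDiff_infty_iff_deriv.mp hxi2).2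
      have hode : ∀ τ, deriv (deriv (deriv ξ)) τ = -(k^2) * deriv ξ τ := by
        intro τ
        have := h τ
        rw [hiter] at this
        linarith
      have hsol := ode2_solution k hkpos (deriv ξ) hg hode
      set c1 := deriv ξ 0 with hc1
      set c2 := deriv (deriv ξ) 0 / k with hc2
      refine ⟨ξ 0 + c2/k, -(c2/k), c1/k, ?_⟩
      have hDd : ∀ τ, HasDerivAt
          (fun x => ξ x - ((ξ 0 + c2/k) + ((-(c2/k)) * Real.cos (k*x) + (c1/k) * Real.sin (k*x)))) 0 τ := by
        intro τ
        have hx : HasDerivAt ξ (deriv ξ τ) τ :=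
          ((contDiff_infty_iff_deriv.mp hxi2).1 τ).hasDerivAt
        have htr := (trig_hasDerivAt k (-(c2/k)) (c1/k) τ).const_add (ξ 0 + c2/k)
        have := hx.sub htr
        refine this.congr_deriv ?_
        rw [hsol τ]
        field_simp
        ring
      intro τ
      have hconst := is_const_of_deriv_eq_zero
        (fun x => (hDd x).differentiableAt) (fun x => (hDd x).deriv) τ 0
      simp only [Real.cos_zero, Real.sin_zero, mul_zero, mul_one] at hconst
      linarith [hconst]
    · -- explicit form → ODE
      rintro ⟨a, b, c, h⟩ τ
      have hfun : ξ = fun x => a + (b * Real.cos (k*x) + c * Real.sin (k*x)) := by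
        funext x; rw [h x]; ring
      have hd1 : deriv ξ = fun x => (c*k) * Real.cos (k*x) + (-(b*k)) * Real.sin (k*x) := by
        funext x
        rw [hfun]
        exact ((trig_hasDerivAt k b c x).const_add a).deriv
      have hd2 : deriv (deriv ξ) =
          fun x => ((-(b*k))*k) * Real.cos (k*x) + (-((c*k)*k)) * Real.sin (k*x) := by
        funext x
        rw [hd1]
        exact (trig_hasDerivAt k (c*k) (-(b*k)) x).deriv
      have hd3 : deriv (deriv (deriv ξ)) =
          fun x => ((-((c*k)*k))*k) * Real.cos (k*x) + (-(((-(b*k))*k)*k)) * Real.sin (k*x) := by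
        funext x
        rw [hd2]
        exact (trig_hasDerivAt k ((-(b*k))*k) (-((c*k)*k)) x).deriv
      rw [hiter, hd3, hd1]
      ring
  · -- periodicity
    rintro ⟨a, b, c, h⟩ τ
    rw [h (τ + 2*π), h τ]
    have e : k * (τ + 2*π) = k*τ + (n:ℝ) * (2*π) := by rw [hkdef]; ring
    rw [e, Real.cos_add_nat_mul_two_pi, Real.sin_add_nat_mul_two_pi]
end
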